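/- Rotational null-form estimate, first null condition (Lemma 4.2, inequality (4.5)): Let g^{ijk} (i,j,k ∈ {1,2}) be real constants satisfying Σ g^{ijk} ω_i ω_j ω_k = 0 for every unit vector ω = (ω_1, ω_2) ∈ ℝ². Then there is a constant C > 0 (depending only on g) such that for all smooth functions φ, ψ, χ on a neighborhood of a point x ∈ ℝ² with x ≠ 0, writing r = |x|: |Σ g^{ijk} ∂_i φ ∂_j ψ ∂_k χ| ≤ C r^{−1} ( |Ωφ| |∂ψ| |∂χ| + |∂φ| |Ωψ| |∂χ| + |∂φ| |∂ψ| |Ωχ| ), all quantities evaluated at x. -/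

import Mathlib

open MeasureTheory

noncomputable section

namespace Paper

/-- Two-dimensional Euclidean space. -/
abbrev Pt2 := EuclideanSpace ℝ (Fin 2)

/-- Time derivative ∂_t. -/
def tD (φ : ℝ → Pt2 → ℝ) : ℝ → Pt2 → ℝ := fun t x => deriv (fun s => φ s x) t

/-- Spatial derivative ∂_i (i = 1,2). -/
def xD (i : Fin 2) (φ : ℝ → Pt2 → ℝ) : ℝ → Pt2 → ℝ :=
  fun t x => fderiv ℝ (fun y => φ t y) x (EuclideanSpace.single i 1)

/-- First-order space-time derivatives: ∂_0 = ∂_t, ∂_1, ∂_2. -/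
def pD : Fin 3 → (ℝ → Pt2 → ℝ) → ℝ → Pt2 → ℝ := ![tD, xD 0, xD 1]

/-- Scaling field S = t∂_t + r∂_r = t∂_t + x·∇. -/
def sD (φ : ℝ → Pt2 → ℝ) : ℝ → Pt2 → ℝ :=
  fun t x => t * tD φ t x + x 0 * xD 0 φ t x + x 1 * xD 1 φ t x

/-- Rotation field Ω = x₂∂₁ − x₁∂₂. -/
def oD (φ : ℝ → Pt2 → ℝ) : ℝ → Pt2 → ℝ :=
  fun t x => x 1 * xD 0 φ t x - x 0 * xD 1 φ t x

/-- Radial derivative ∂_r = (x/r)·∇. -/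
def rD (φ : ℝ → Pt2 → ℝ) : ℝ → Pt2 → ℝ :=
  fun t x => (x 0 * xD 0 φ t x + x 1 * xD 1 φ t x) / ‖x‖

/-- The five admissible vector fields Γ ∈ {∂_t, ∂_1, ∂_2, S, Ω}. -/
inductive VF : Type
  | t | x1 | x2 | s | om
  deriving DecidableEq

instance instFintypeVF : Fintype VF where
  elems := {VF.t, VF.x1, VF.x2, VF.s, VF.om}
  complete := fun x => by cases x <;> first | decide | simp

/-- Action of a vector field Γ on a function. -/
def VF.apply : VF → (ℝ → Pt2 → ℝ) → ℝ → Pt2 → ℝ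
  | .t => tD
  | .x1 => xD 0
  | .x2 => xD 1
  | .s => sD
  | .om => oD

/-- Iterated vector fields Γ^α for a word α. -/
def GammaIter : List VF → (ℝ → Pt2 → ℝ) → ℝ → Pt2 → ℝ
  | [], φ => φ
  | v :: l, φ => v.apply (GammaIter l φ)

/-- Γ^α for a multi-index α of length k. -/
def GammaW {k : ℕ} (α : Fin k → VF) (φ : ℝ → Pt2 → ℝ) : ℝ → Pt2 → ℝ :=
  GammaIter (List.ofFn α) φ

/-- Japanese bracket ⟨s⟩ = (1 + s²)^{1/2}. -/
def jb (s : ℝ) : ℝ := Real.sqrt (1 + s ^ 2)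

/-- Spatial L² norm. -/
def L2 (f : Pt2 → ℝ) : ℝ := Real.sqrt (∫ x : Pt2, (f x) ^ 2)

/-- κ-th order generalized energy E_κ(φ)(t). -/
def Ek (κ : ℕ) (φ : ℝ → Pt2 → ℝ) (t : ℝ) : ℝ :=
  (1/2) * ∑ k ∈ Finset.range κ, ∑ α : Fin k → VF,
    ∫ x : Pt2, ((tD (GammaW α φ) t x) ^ 2 + (xD 0 (GammaW α φ) t x) ^ 2
      + (xD 1 (GammaW α φ) t x) ^ 2)

/-- The d'Alembertian □φ = ∂_t²φ − Δφ. -/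
def waveOp (φ : ℝ → Pt2 → ℝ) : ℝ → Pt2 → ℝ :=
  fun t x => tD (tD φ) t x - (xD 0 (xD 0 φ) t x + xD 1 (xD 1 φ) t x)

/-- Spatial derivative ∂_i of a function on ℝ². -/
def xDs (i : Fin 2) (u : Pt2 → ℝ) : Pt2 → ℝ :=
  fun x => fderiv ℝ u x (EuclideanSpace.single i 1)

/-- Rotation derivative Ωu = x₂∂₁u − x₁∂₂u. -/
def oDs (u : Pt2 → ℝ) : Pt2 → ℝ := fun x => x 1 * xDs 0 u x - x 0 * xDs 1 u x

/-- |∂u|: maximum of the two spatial derivatives. -/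
def ndS (u : Pt2 → ℝ) (x : Pt2) : ℝ := max |xDs 0 u x| |xDs 1 u x|

/-- u is smooth on a neighborhood of the point x. -/
def SmoothNearS (u : Pt2 → ℝ) (x : Pt2) : Prop :=
  ∃ s ∈ nhds x, ContDiffOn ℝ (⊤ : ℕ∞) u s

/-- Auxiliary triple-product telescoping estimate. -/
lemma tri_aux {r d1 d2 d3 a1 a2 a3 o1 o2 o3 p1 p2 p3 : ℝ} (hr : 0 < r)
    (hp1 : 0 ≤ p1) (hp2 : 0 ≤ p2) (hp3 : 0 ≤ p3)
    (ho1 : 0 ≤ o1) (ho2 : 0 ≤ o2) (ho3 : 0 ≤ o3)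
    (hd2 : |d2| ≤ p2) (hd3 : |d3| ≤ p3)
    (ha1 : |a1| ≤ 2 * p1) (ha2 : |a2| ≤ 2 * p2)
    (h1 : |d1 - a1| ≤ o1 / r) (h2 : |d2 - a2| ≤ o2 / r) (h3 : |d3 - a3| ≤ o3 / r) :
    |d1 * d2 * d3 - a1 * a2 * a3| ≤ 4 / r * (o1 * p2 * p3 + p1 * o2 * p3 + p1 * p2 * o3) := by
  have key : d1 * d2 * d3 - a1 * a2 * a3
      = (d1 - a1) * d2 * d3 + a1 * (d2 - a2) * d3 + a1 * a2 * (d3 - a3) := by ring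
  have b1 : |(d1 - a1) * d2 * d3| ≤ o1 / r * p2 * p3 := by
    rw [abs_mul, abs_mul]; gcongr <;> positivity
  have b2 : |a1 * (d2 - a2) * d3| ≤ 2 * p1 * (o2 / r) * p3 := by
    rw [abs_mul, abs_mul]; gcongr <;> positivity
  have b3 : |a1 * a2 * (d3 - a3)| ≤ 2 * p1 * (2 * p2) * (o3 / r) := by
    rw [abs_mul, abs_mul]; gcongr <;> positivity
  have htri := abs_add_three ((d1 - a1) * d2 * d3) (a1 * (d2 - a2) * d3) (a1 * a2 * (d3 - a3))
  rw [key]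
  refine htri.trans ((add_le_add (add_le_add b1 b2) b3).trans ?_)
  simp only [div_eq_mul_inv]
  have hs : 0 ≤ r⁻¹ := by positivity
  nlinarith [mul_nonneg hs (mul_nonneg (mul_nonneg ho1 hp2) hp3),
    mul_nonneg hs (mul_nonneg (mul_nonneg hp1 ho2) hp3),
    mul_nonneg hs (mul_nonneg (mul_nonneg hp1 hp2) ho3)]

/-- Lemma 4.2, inequality (4.5): rotational null-form estimate under the first
  null condition. -/
theorem rotational_null_form_first (g : Fin 2 → Fin 2 → Fin 2 → ℝ)
    (hnull : ∀ ω : Fin 2 → ℝ, ω 0 ^ 2 + ω 1 ^ 2 = 1 →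
      ∑ i : Fin 2, ∑ j : Fin 2, ∑ k : Fin 2, g i j k * ω i * ω j * ω k = 0) :
    ∃ C : ℝ, 0 < C ∧ ∀ (x : Pt2) (φ ψ χ : Pt2 → ℝ), x ≠ 0 →
      SmoothNearS φ x → SmoothNearS ψ x → SmoothNearS χ x →
      |∑ i : Fin 2, ∑ j : Fin 2, ∑ k : Fin 2,
          g i j k * xDs i φ x * xDs j ψ x * xDs k χ x| ≤
        C * ‖x‖⁻¹ *
          (|oDs φ x| * ndS ψ x * ndS χ x + ndS φ x * |oDs ψ x| * ndS χ x
            + ndS φ x * ndS ψ x * |oDs χ x|) := by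
  refine ⟨4 * (∑ i : Fin 2, ∑ j : Fin 2, ∑ k : Fin 2, |g i j k|) + 1, by positivity, ?_⟩
  intro x φ ψ χ hx _ _ _
  set r := ‖x‖ with hrdef
  have hr : 0 < r := by simpa [hrdef] using norm_pos_iff.mpr hx
  have hr2 : x 0 ^ 2 + x 1 ^ 2 = r ^ 2 := by
    rw [hrdef, EuclideanSpace.norm_eq, Real.sq_sqrt (by positivity)]
    simp [Fin.sum_univ_two, sq_abs]
  set w : Fin 2 → ℝ := fun i => x i / r with hwdef
  have hw : w 0 ^ 2 + w 1 ^ 2 = 1 := by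
    simp only [hwdef]
    field_simp
    linarith [hr2]
  have hw0 : |w 0| ≤ 1 := by
    nlinarith [sq_abs (w 0), sq_nonneg (|w 0| - 1), abs_nonneg (w 0), sq_nonneg (w 1)]
  have hw1 : |w 1| ≤ 1 := by
    nlinarith [sq_abs (w 1), sq_nonneg (|w 1| - 1), abs_nonneg (w 1), sq_nonneg (w 0)]
  have hwle : ∀ i : Fin 2, |w i| ≤ 1 := by
    intro i; fin_cases i <;> assumption
  have hP : ∀ u : Pt2 → ℝ, 0 ≤ ndS u x :=
    fun u => le_trans (abs_nonneg _) (le_max_left _ _)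
  have hD : ∀ (u : Pt2 → ℝ) (i : Fin 2), |xDs i u x| ≤ ndS u x := by
    intro u i; fin_cases i
    · exact le_max_left _ _
    · exact le_max_right _ _
  have haw : ∀ (u : Pt2 → ℝ) (i : Fin 2),
      |w i * (w 0 * xDs 0 u x + w 1 * xDs 1 u x)| ≤ 2 * ndS u x := by
    intro u i
    rw [abs_mul]
    have h1 : |w 0 * xDs 0 u x + w 1 * xDs 1 u x| ≤ 2 * ndS u x := by
      refine (abs_add_le _ _).trans ?_
      rw [abs_mul, abs_mul]
      have b0 : |w 0| * |xDs 0 u x| ≤ 1 * ndS u x :=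
        mul_le_mul hw0 (hD u 0) (abs_nonneg _) zero_le_one
      have b1 : |w 1| * |xDs 1 u x| ≤ 1 * ndS u x :=
        mul_le_mul hw1 (hD u 1) (abs_nonneg _) zero_le_one
      linarith
    calc |w i| * |w 0 * xDs 0 u x + w 1 * xDs 1 u x|
        ≤ 1 * (2 * ndS u x) :=
          mul_le_mul (hwle i) h1 (abs_nonneg _) zero_le_one
      _ = 2 * ndS u x := by ring
  have hdec : ∀ (u : Pt2 → ℝ) (i : Fin 2),
      |xDs i u x - w i * (w 0 * xDs 0 u x + w 1 * xDs 1 u x)| ≤ |oDs u x| / r := by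
    intro u i
    have hΩ : oDs u x = x 1 * xDs 0 u x - x 0 * xDs 1 u x := rfl
    fin_cases i
    · show |xDs 0 u x - w 0 * (w 0 * xDs 0 u x + w 1 * xDs 1 u x)| ≤ |oDs u x| / r
      have hid : xDs 0 u x - w 0 * (w 0 * xDs 0 u x + w 1 * xDs 1 u x)
          = w 1 * (oDs u x / r) := by
        simp only [hwdef, hΩ]
        field_simp
        linear_combination (-(xDs 0 u x)) * hr2
      have hod : |oDs u x / r| = |oDs u x| / r := by
        rw [abs_div, abs_of_pos hr]
      rw [hid, abs_mul, hod]
      calc |w 1| * (|oDs u x| / r) ≤ 1 * (|oDs u x| / r) :=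
            mul_le_mul_of_nonneg_right hw1 (by positivity)
        _ = |oDs u x| / r := by ring
    · show |xDs 1 u x - w 1 * (w 0 * xDs 0 u x + w 1 * xDs 1 u x)| ≤ |oDs u x| / r
      have hid : xDs 1 u x - w 1 * (w 0 * xDs 0 u x + w 1 * xDs 1 u x)
          = (-w 0) * (oDs u x / r) := by
        simp only [hwdef, hΩ]
        field_simp
        linear_combination (-(xDs 1 u x)) * hr2
      have hod : |oDs u x / r| = |oDs u x| / r := by
        rw [abs_div, abs_of_pos hr]
      rw [hid, abs_mul, abs_neg, hod]
      calc |w 0| * (|oDs u x| / r) ≤ 1 * (|oDs u x| / r) :=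
            mul_le_mul_of_nonneg_right hw0 (by positivity)
        _ = |oDs u x| / r := by ring
  set Aφ := w 0 * xDs 0 φ x + w 1 * xDs 1 φ x with hAφ
  set Aψ := w 0 * xDs 0 ψ x + w 1 * xDs 1 ψ x with hAψ
  set Aχ := w 0 * xDs 0 χ x + w 1 * xDs 1 χ x with hAχ
  set c := |oDs φ x| * ndS ψ x * ndS χ x + ndS φ x * |oDs ψ x| * ndS χ x
      + ndS φ x * ndS ψ x * |oDs χ x| with hcdef
  have hc : 0 ≤ c := by
    have := hP φ; have := hP ψ; have := hP χ
    have h1 := mul_nonneg (mul_nonneg (abs_nonneg (oDs φ x)) (hP ψ)) (hP χ)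
    have h2 := mul_nonneg (mul_nonneg (hP φ) (abs_nonneg (oDs ψ x))) (hP χ)
    have h3 := mul_nonneg (mul_nonneg (hP φ) (hP ψ)) (abs_nonneg (oDs χ x))
    linarith
  have key : ∀ i j k : Fin 2,
      |xDs i φ x * xDs j ψ x * xDs k χ x - (w i * Aφ) * (w j * Aψ) * (w k * Aχ)|
        ≤ 4 / r * c := by
    intro i j k
    rw [hcdef]
    exact tri_aux hr (hP φ) (hP ψ) (hP χ) (abs_nonneg _) (abs_nonneg _) (abs_nonneg _)
      (hD ψ j) (hD χ k) (haw φ i) (haw ψ j) (hdec φ i) (hdec ψ j) (hdec χ k)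
  have hnull' := hnull w hw
  have heq : (∑ i : Fin 2, ∑ j : Fin 2, ∑ k : Fin 2,
        g i j k * xDs i φ x * xDs j ψ x * xDs k χ x)
      = ∑ i : Fin 2, ∑ j : Fin 2, ∑ k : Fin 2,
        g i j k * (xDs i φ x * xDs j ψ x * xDs k χ x
          - (w i * Aφ) * (w j * Aψ) * (w k * Aχ)) := by
    simp only [Fin.sum_univ_two] at hnull' ⊢
    linear_combination (Aφ * Aψ * Aχ) * hnull'
  have habs : ∀ f : Fin 2 → Fin 2 → Fin 2 → ℝ,
      |∑ i : Fin 2, ∑ j : Fin 2, ∑ k : Fin 2, f i j k|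
        ≤ ∑ i : Fin 2, ∑ j : Fin 2, ∑ k : Fin 2, |f i j k| := by
    intro f
    refine (Finset.abs_sum_le_sum_abs _ _).trans (Finset.sum_le_sum fun i _ => ?_)
    refine (Finset.abs_sum_le_sum_abs _ _).trans (Finset.sum_le_sum fun j _ => ?_)
    exact Finset.abs_sum_le_sum_abs _ _
  calc |∑ i : Fin 2, ∑ j : Fin 2, ∑ k : Fin 2,
        g i j k * xDs i φ x * xDs j ψ x * xDs k χ x|
      = |∑ i : Fin 2, ∑ j : Fin 2, ∑ k : Fin 2,
          g i j k * (xDs i φ x * xDs j ψ x * xDs k χ x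
            - (w i * Aφ) * (w j * Aψ) * (w k * Aχ))| := by rw [heq]
    _ ≤ ∑ i : Fin 2, ∑ j : Fin 2, ∑ k : Fin 2,
          |g i j k * (xDs i φ x * xDs j ψ x * xDs k χ x
            - (w i * Aφ) * (w j * Aψ) * (w k * Aχ))| := habs _
    _ ≤ ∑ i : Fin 2, ∑ j : Fin 2, ∑ k : Fin 2, |g i j k| * (4 / r * c) := by
        refine Finset.sum_le_sum fun i _ => Finset.sum_le_sum fun j _ =>
          Finset.sum_le_sum fun k _ => ?_
        rw [abs_mul]
        exact mul_le_mul_of_nonneg_left (key i j k) (abs_nonneg _)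
    _ = (∑ i : Fin 2, ∑ j : Fin 2, ∑ k : Fin 2, |g i j k|) * (4 / r * c) := by
        simp only [← Finset.sum_mul]
    _ ≤ (4 * (∑ i : Fin 2, ∑ j : Fin 2, ∑ k : Fin 2, |g i j k|) + 1) * r⁻¹ * c := by
        have hG : 0 ≤ ∑ i : Fin 2, ∑ j : Fin 2, ∑ k : Fin 2, |g i j k| := by positivity
        rw [div_eq_mul_inv]
        nlinarith [mul_nonneg (inv_nonneg.mpr hr.le) hc,
          mul_nonneg hG (mul_nonneg (inv_nonneg.mpr hr.le) hc)]

end Paper
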